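/- arXiv:0910.0499 — 7 statements merged into one kernel-verified Lean document; each statement's English description precedes it below -/
import Mathlib

section
/- Let K ≤ P be positive integers and K₁, K₂, K₃ i.i.d. uniform K-subsets of {1,…,P}. Then the probability that all three pairwise intersections are nonempty (i.e., nodes 1,2,3 form a triangle in the random key graph) equals β(K,P) := (1−q)³ + q³ − q·r, where q = q(K,P) and r = r(K,P). -/
open Finset

/-- `q(K,P) = C(P-K,K)/C(P,K)` if `2K ≤ P`, else 0. -/
noncomputable def qKP (K P : ℕ) : ℝ :=
  if 2 * K ≤ P then ((P - K).choose K : ℝ) / (P.choose K) else 0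

/-- `r(K,P) = C(P-2K,K)/C(P,K)` if `3K ≤ P`, else 0. -/
noncomputable def rKP (K P : ℕ) : ℝ :=
  if 3 * K ≤ P then ((P - 2 * K).choose K : ℝ) / (P.choose K) else 0

/-- `β(K,P) = (1-q)³ + q³ - q r`, the probability that three nodes form a triangle. -/
noncomputable def betaKP (K P : ℕ) : ℝ :=
  (1 - qKP K P) ^ 3 + (qKP K P) ^ 3 - qKP K P * rKP K P

/-!
With `δ X Y` the indicator of `Disjoint X Y`, `n = C(P,K)`, `M = C(P-K,K)` and `R = C(P-2K,K)`,
the number of pairwise intersecting triples of `K`-sets is `∑ (1 - δ A B) (1 - δ A C) (1 - δ B C)`.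
Summing over `C` first, `∑_C δ A C δ B C` counts the `K`-sets avoiding `A ∪ B`: this is `R` when
`A` and `B` are disjoint, and summing it over `B` first instead gives `M²`. So the count is
`n ((n - M)(n - 2M) + M² - M R)`, and dividing by `n³` gives `1 - 3q + 3q² - q r = β`.
-/

lemma qKP_eq (K P : ℕ) : qKP K P = ((P - K).choose K : ℝ) / P.choose K := by
  unfold qKP
  split_ifs with h
  · rfl
  · simp [Nat.choose_eq_zero_of_lt (show P - K < K by omega)]

lemma rKP_eq (K P : ℕ) : rKP K P = ((P - 2 * K).choose K : ℝ) / P.choose K := by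
  unfold rKP
  split_ifs with h
  · rfl
  · simp [Nat.choose_eq_zero_of_lt (show P - 2 * K < K by omega)]

section DisjointIndicator

variable {α : Type*} [DecidableEq α]

noncomputable def disjointIndicator (X Y : Finset α) : ℝ := if Disjoint X Y then 1 else 0

local notation "δ" => disjointIndicator

lemma disjointIndicator_comm (X Y : Finset α) : δ X Y = δ Y X := by
  simp only [disjointIndicator, disjoint_comm]

lemma disjointIndicator_mul_disjointIndicator (A B C : Finset α) :
    δ A C * δ B C = δ C (A ∪ B) := by
  by_cases hA : Disjoint A C <;> by_cases hB : Disjoint B C <;>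
    simp [disjointIndicator, disjoint_union_right, disjoint_comm, hA, hB]

lemma ite_pairwise_nonempty_inter (A B C : Finset α) :
    (if (A ∩ B).Nonempty ∧ (A ∩ C).Nonempty ∧ (B ∩ C).Nonempty then 1 else 0 : ℝ) =
      (1 - δ A B) * ((1 - δ A C) * (1 - δ B C)) := by
  simp only [disjointIndicator, ← not_disjoint_iff_nonempty_inter]
  split_ifs <;> simp_all

variable [Fintype α]

lemma card_filter_disjoint_powersetCard (K : ℕ) (S : Finset α) :
    #{C ∈ (univ : Finset α).powersetCard K | Disjoint C S} = (Fintype.card α - #S).choose K := by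
  have h : {C ∈ (univ : Finset α).powersetCard K | Disjoint C S} = Sᶜ.powersetCard K := by
    ext C
    simp [subset_compl_iff_disjoint_right, and_comm]
  rw [h, card_powersetCard, card_compl]

lemma sum_disjointIndicator_right (K : ℕ) (S : Finset α) :
    ∑ C ∈ univ.powersetCard K, δ C S = ((Fintype.card α - #S).choose K : ℝ) := by
  rw [← card_filter_disjoint_powersetCard, card_filter]
  push_cast
  rfl

lemma sum_disjointIndicator_left {K : ℕ} {A : Finset α} (hA : #A = K) :
    ∑ C ∈ univ.powersetCard K, δ A C = ((Fintype.card α - K).choose K : ℝ) := by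
  simp_rw [disjointIndicator_comm A, sum_disjointIndicator_right, hA]

lemma sum_disjointIndicator_mul (K : ℕ) (A B : Finset α) :
    ∑ C ∈ univ.powersetCard K, δ A C * δ B C = ((Fintype.card α - #(A ∪ B)).choose K : ℝ) := by
  simp_rw [disjointIndicator_mul_disjointIndicator, sum_disjointIndicator_right]

lemma disjointIndicator_mul_sum_disjointIndicator_mul {K : ℕ} {A B : Finset α}
    (hA : #A = K) (hB : #B = K) :
    δ A B * ∑ C ∈ univ.powersetCard K, δ A C * δ B C =
      δ A B * ((Fintype.card α - 2 * K).choose K : ℝ) := by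
  rw [sum_disjointIndicator_mul]
  by_cases h : Disjoint A B
  · rw [card_union_of_disjoint h, hA, hB, two_mul]
  · simp [disjointIndicator, h]

lemma sum_one_sub_disjointIndicator_mul {K : ℕ} {A B : Finset α} (hA : #A = K) (hB : #B = K) :
    ∑ C ∈ univ.powersetCard K, (1 - δ A C) * (1 - δ B C) =
      (Fintype.card α).choose K - 2 * ((Fintype.card α - K).choose K : ℝ) +
        ∑ C ∈ univ.powersetCard K, δ A C * δ B C := by
  have expand : ∀ C, (1 - δ A C) * (1 - δ B C) = 1 - δ A C - δ B C + δ A C * δ B C :=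
    fun C ↦ by ring
  simp only [expand, sum_add_distrib, sum_sub_distrib, sum_const, card_powersetCard,
    card_univ, nsmul_eq_mul, mul_one, sum_disjointIndicator_left hA,
    sum_disjointIndicator_left hB]
  ring

lemma sum_sum_disjointIndicator_mul {K : ℕ} {A : Finset α} (hA : #A = K) :
    ∑ B ∈ univ.powersetCard K, ∑ C ∈ univ.powersetCard K, δ A C * δ B C =
      ((Fintype.card α - K).choose K : ℝ) ^ 2 := by
  rw [sum_comm]
  calc ∑ C ∈ univ.powersetCard K, ∑ B ∈ univ.powersetCard K, δ A C * δ B C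
      = ∑ C ∈ univ.powersetCard K, δ A C * ((Fintype.card α - K).choose K : ℝ) := by
        refine sum_congr rfl fun C hC ↦ ?_
        rw [← mul_sum, sum_disjointIndicator_right, mem_powersetCard_univ.mp hC]
    _ = ((Fintype.card α - K).choose K : ℝ) ^ 2 := by
        rw [← sum_mul, sum_disjointIndicator_left hA, sq]

lemma sum_one_sub_disjointIndicator_mul_sum {K : ℕ} {A : Finset α} (hA : #A = K) :
    ∑ B ∈ univ.powersetCard K,
        (1 - δ A B) * ∑ C ∈ univ.powersetCard K, (1 - δ A C) * (1 - δ B C) =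
      ((Fintype.card α).choose K - (Fintype.card α - K).choose K : ℝ) *
          ((Fintype.card α).choose K - 2 * (Fintype.card α - K).choose K) +
        ((Fintype.card α - K).choose K : ℝ) ^ 2 -
        (Fintype.card α - K).choose K * (Fintype.card α - 2 * K).choose K := by
  have expand : ∀ B ∈ univ.powersetCard K,
      (1 - δ A B) * ∑ C ∈ univ.powersetCard K, (1 - δ A C) * (1 - δ B C) =
        (1 - δ A B) * ((Fintype.card α).choose K - 2 * (Fintype.card α - K).choose K) +
          ∑ C ∈ univ.powersetCard K, δ A C * δ B C -
          δ A B * (Fintype.card α - 2 * K).choose K := fun B hB ↦ by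
    have hB := mem_powersetCard_univ.mp hB
    rw [sum_one_sub_disjointIndicator_mul hA hB,
      ← disjointIndicator_mul_sum_disjointIndicator_mul hA hB]
    ring
  rw [sum_congr rfl expand, sum_sub_distrib, sum_add_distrib, ← sum_mul, ← sum_mul,
    sum_sum_disjointIndicator_mul hA, sum_sub_distrib, sum_disjointIndicator_left hA]
  simp only [sum_const, card_powersetCard, card_univ, nsmul_eq_mul, mul_one]

lemma card_filter_pairwise_nonempty_inter (K : ℕ) :
    (#{t ∈ (univ : Finset α).powersetCard K ×ˢ univ.powersetCard K ×ˢ univ.powersetCard K |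
        (t.1 ∩ t.2.1).Nonempty ∧ (t.1 ∩ t.2.2).Nonempty ∧ (t.2.1 ∩ t.2.2).Nonempty} : ℝ) =
      (Fintype.card α).choose K *
        (((Fintype.card α).choose K - (Fintype.card α - K).choose K : ℝ) *
            ((Fintype.card α).choose K - 2 * (Fintype.card α - K).choose K) +
          ((Fintype.card α - K).choose K : ℝ) ^ 2 -
          (Fintype.card α - K).choose K * (Fintype.card α - 2 * K).choose K) := by
  rw [card_filter]
  push_cast
  simp_rw [sum_product, ite_pairwise_nonempty_inter, ← mul_sum]
  rw [sum_congr rfl fun A hA ↦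
    sum_one_sub_disjointIndicator_mul_sum (mem_powersetCard_univ.mp hA)]
  simp only [sum_const, card_powersetCard, card_univ, nsmul_eq_mul]

end DisjointIndicator

theorem prob_triangle_general (K P : ℕ) (hKP : K ≤ P) :
    ((((Finset.univ.powersetCard K ×ˢ (Finset.univ.powersetCard K ×ˢ Finset.univ.powersetCard K) :
          Finset (Finset (Fin P) × (Finset (Fin P) × Finset (Fin P)))).filter
          (fun t => (t.1 ∩ t.2.1).Nonempty ∧ (t.1 ∩ t.2.2).Nonempty ∧ (t.2.1 ∩ t.2.2).Nonempty)).card : ℝ) /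
        ((Finset.univ.powersetCard K ×ˢ (Finset.univ.powersetCard K ×ˢ Finset.univ.powersetCard K) :
          Finset (Finset (Fin P) × (Finset (Fin P) × Finset (Fin P)))).card : ℝ))
      = betaKP K P := by
  have hn : (P.choose K : ℝ) ≠ 0 := by exact_mod_cast (Nat.choose_pos hKP).ne'
  rw [card_filter_pairwise_nonempty_inter, card_product, card_product, card_powersetCard,
    card_univ, Fintype.card_fin, betaKP, qKP_eq, rKP_eq]
  push_cast
  field_simp
  ring

theorem prob_triangle (K P : ℕ) (hK : 0 < K) (hKP : K ≤ P) :
    ((((Finset.univ.powersetCard K ×ˢ (Finset.univ.powersetCard K ×ˢ Finset.univ.powersetCard K) :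
          Finset (Finset (Fin P) × (Finset (Fin P) × Finset (Fin P)))).filter
          (fun t => (t.1 ∩ t.2.1).Nonempty ∧ (t.1 ∩ t.2.2).Nonempty ∧ (t.2.1 ∩ t.2.2).Nonempty)).card : ℝ) /
        ((Finset.univ.powersetCard K ×ˢ (Finset.univ.powersetCard K ×ˢ Finset.univ.powersetCard K) :
          Finset (Finset (Fin P) × (Finset (Fin P) × Finset (Fin P)))).card : ℝ))
      = betaKP K P :=
  prob_triangle_general K P hKP
end

section
/- For positive integers K ≤ P, the inequality r(K,P) ≤ q(K,P)² holds, and consequently β(K,P) = (1−q)³ + q³ − q·r ≥ (1−q(K,P))³ > 0. -/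
namespace Nat

theorem descFactorial_mul_descFactorial_le_sq (n k t : ℕ) :
    n.descFactorial k * (n + 2 * t).descFactorial k ≤ ((n + t).descFactorial k) ^ 2 := by
  simp only [descFactorial_eq_prod_range, ← Finset.prod_mul_distrib, ← Finset.prod_pow]
  refine Finset.prod_le_prod' fun i _ => ?_
  rcases le_or_gt i n with hi | hi
  · obtain ⟨a, rfl⟩ := Nat.exists_eq_add_of_le hi
    have ha : i + a + 2 * t - i = a + 2 * t := by omega
    have hat : i + a + t - i = a + t := by omega
    rw [Nat.add_sub_cancel_left, ha, hat]
    nlinarith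
  · simp [Nat.sub_eq_zero_of_le hi.le]

theorem choose_mul_choose_le_sq (n k t : ℕ) :
    n.choose k * (n + 2 * t).choose k ≤ ((n + t).choose k) ^ 2 := by
  have h := descFactorial_mul_descFactorial_le_sq n k t
  simp only [descFactorial_eq_factorial_mul_choose] at h
  refine Nat.le_of_mul_le_mul_left (?_ : k ! ^ 2 * _ ≤ k ! ^ 2 * _) (pow_pos k.factorial_pos 2)
  linarith

theorem choose_lt_choose {m n k : ℕ} (hk : 0 < k) (hkn : k ≤ n) (hmn : m < n) :
    m.choose k < n.choose k := by
  obtain ⟨n, rfl⟩ := Nat.exists_eq_add_one_of_ne_zero (by omega : n ≠ 0)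
  obtain ⟨k, rfl⟩ := Nat.exists_eq_add_one_of_ne_zero hk.ne'
  have hpos : 0 < n.choose k := choose_pos (by omega)
  calc m.choose (k + 1) ≤ n.choose (k + 1) := choose_le_choose _ (by omega)
    _ < n.choose k + n.choose (k + 1) := by omega
    _ = (n + 1).choose (k + 1) := (choose_succ_succ n k).symm

end Nat

theorem qKP_nonneg (K P : ℕ) : 0 ≤ qKP K P := by
  unfold qKP
  split_ifs <;> positivity

theorem qKP_lt_one {K : ℕ} (P : ℕ) (hK : 0 < K) : qKP K P < 1 := by
  unfold qKP
  split_ifs with h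
  · have hlt : (P - K).choose K < P.choose K := Nat.choose_lt_choose hK (by omega) (by omega)
    rw [div_lt_one (by exact_mod_cast (Nat.zero_le _).trans_lt hlt)]
    exact_mod_cast hlt
  · exact one_pos

theorem rKP_le_qKP_sq (K P : ℕ) : rKP K P ≤ qKP K P ^ 2 := by
  unfold rKP
  split_ifs with h
  · have hnat : (P - 2 * K).choose K * P.choose K ≤ ((P - K).choose K) ^ 2 := by
      simpa [show P - 2 * K + 2 * K = P by omega, show P - 2 * K + K = P - K by omega]
        using Nat.choose_mul_choose_le_sq (P - 2 * K) K K
    have hC : (0 : ℝ) < P.choose K := by exact_mod_cast Nat.choose_pos (by omega)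
    rw [qKP, if_pos (by omega), div_pow, div_le_div_iff₀ hC (by positivity), sq (P.choose K : ℝ),
      ← mul_assoc]
    exact_mod_cast Nat.mul_le_mul_right _ hnat
  · positivity

theorem r_le_q_sq_and_beta_pos_general (K P : ℕ) (hK : 0 < K) :
    rKP K P ≤ (qKP K P) ^ 2 ∧
    (1 - qKP K P) ^ 3 ≤ betaKP K P ∧
    0 < (1 - qKP K P) ^ 3 := by
  have hr := rKP_le_qKP_sq K P
  have hq0 := qKP_nonneg K P
  have hq1 := qKP_lt_one P hK
  refine ⟨hr, ?_, pow_pos (sub_pos.mpr hq1) 3⟩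
  have : qKP K P * rKP K P ≤ qKP K P ^ 3 := by
    simpa [pow_succ'] using mul_le_mul_of_nonneg_left hr hq0
  unfold betaKP
  linarith

theorem r_le_q_sq_and_beta_pos (K P : ℕ) (hK : 0 < K) (hKP : K ≤ P) :
    rKP K P ≤ (qKP K P) ^ 2 ∧
    (1 - qKP K P) ^ 3 ≤ betaKP K P ∧
    0 < (1 - qKP K P) ^ 3 :=
  r_le_q_sq_and_beta_pos_general K P hK
end

section
/- Let K, P : ℕ → ℕ be sequences with K_n ≤ P_n. Then lim_{n→∞} q(K_n,P_n) = 1 if and only if lim_{n→∞} K_n²/P_n = 0, and under either condition 1 − q(K_n,P_n) is asymptotically equivalent to K_n²/P_n (their ratio tends to 1). -/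
/-!
For `2K ≤ P`, `q(K,P) = ∏_{i<K} (1 - K/(P-i))`, and every factor lies between `1 - K/(P-K+1)`
and `1 - K/P`. Bernoulli's inequality on each side gives, with `r = K²/P`,
`r/(1+r) ≤ 1 - q(K,P) ≤ K²/(P-K+1) ≤ r/(1-r)`, the last step once `K² < P`.
Squeezing `(1 - q)/r` between `1/(1+r)` and `1/(1-r)` gives the asymptotics, and with it
`r → 0 ⇒ q → 1`; conversely `q ≤ 1/(1+r)` holds for all `K, P`, so `r ≤ 1/q - 1 → 0`.
-/

open Filter Finset Topology

theorem Nat.cast_choose_div_cast_choose {𝕜 : Type*} [Field 𝕜] [CharZero 𝕜] (m n k : ℕ) :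
    (m.choose k : 𝕜) / n.choose k = (m.descFactorial k : 𝕜) / n.descFactorial k := by
  simp only [Nat.descFactorial_eq_factorial_mul_choose, Nat.cast_mul]
  rw [mul_div_mul_left _ _ (Nat.cast_ne_zero.2 k.factorial_ne_zero)]

theorem qKP_eq_prod {K P : ℕ} (h : 2 * K ≤ P) :
    qKP K P = ∏ i ∈ range K, (1 - K / (P - i : ℝ)) := by
  rw [qKP, if_pos h, Nat.cast_choose_div_cast_choose, Nat.descFactorial_eq_prod_range,
    Nat.descFactorial_eq_prod_range, Nat.cast_prod, Nat.cast_prod, ← prod_div_distrib]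
  refine prod_congr rfl fun i hi => ?_
  have hi : i < K := mem_range.1 hi
  have hPi : (P : ℝ) - i ≠ 0 := sub_ne_zero.2 (by exact_mod_cast (by omega : P ≠ i))
  rw [Nat.cast_sub (by omega), Nat.cast_sub (by omega), Nat.cast_sub (by omega)]
  field_simp
  ring

theorem div_sub_add_one_le_one {K P : ℕ} (h : 2 * K ≤ P) : K / (P - K + 1 : ℝ) ≤ 1 := by
  have h : 2 * (K : ℝ) ≤ P := by exact_mod_cast h
  exact div_le_one_of_le₀ (by linarith) (by linarith)

theorem qKP_factor_bounds {K P i : ℕ} (h : 2 * K ≤ P) (hi : i < K) :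
    1 - K / (P - K + 1 : ℝ) ≤ 1 - K / (P - i : ℝ) ∧
      1 - K / (P - i : ℝ) ≤ 1 - K / (P : ℝ) := by
  have hi : (i : ℝ) + 1 ≤ K := by exact_mod_cast hi
  have h : 2 * (K : ℝ) ≤ P := by exact_mod_cast h
  constructor <;> gcongr <;> linarith

theorem one_sub_pow_le_inv_one_add_mul {α : Type*} [Field α] [LinearOrder α]
    [IsStrictOrderedRing α] {x : α} (h0 : 0 ≤ x) (h1 : x ≤ 1) (n : ℕ) :
    (1 - x) ^ n ≤ (1 + n * x)⁻¹ := by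
  rw [← one_div, le_div_iff₀ (by positivity)]
  calc (1 - x) ^ n * (1 + n * x) ≤ (1 - x) ^ n * (1 + x) ^ n :=
        mul_le_mul_of_nonneg_left (one_add_mul_le_pow (by linarith) n) (pow_nonneg (by linarith) n)
    _ = (1 - x ^ 2) ^ n := by rw [← mul_pow]; ring
    _ ≤ 1 := pow_le_one₀ (by nlinarith) (by nlinarith)

theorem qKP_le_inv_one_add_sq_div (K P : ℕ) : qKP K P ≤ (1 + (K : ℝ) ^ 2 / P)⁻¹ := by
  by_cases h : 2 * K ≤ P
  · have hKP : (K : ℝ) ≤ P := by exact_mod_cast (by omega : K ≤ P)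
    calc qKP K P = ∏ i ∈ range K, (1 - K / (P - i : ℝ)) := qKP_eq_prod h
      _ ≤ ∏ _i ∈ range K, (1 - K / (P : ℝ)) := prod_le_prod
          (fun i hi => (sub_nonneg.2 (div_sub_add_one_le_one h)).trans
            (qKP_factor_bounds h (mem_range.1 hi)).1)
          (fun i hi => (qKP_factor_bounds h (mem_range.1 hi)).2)
      _ = (1 - K / (P : ℝ)) ^ K := by rw [prod_const, card_range]
      _ ≤ (1 + K * (K / (P : ℝ)))⁻¹ :=
          one_sub_pow_le_inv_one_add_mul (by positivity) (div_le_one_of_le₀ hKP (by positivity)) K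
      _ = (1 + (K : ℝ) ^ 2 / P)⁻¹ := by ring
  · rw [qKP, if_neg h]
    positivity

theorem one_sub_sq_div_le_qKP {K P : ℕ} (h : 2 * K ≤ P) :
    1 - (K : ℝ) ^ 2 / (P - K + 1) ≤ qKP K P := by
  have hx := div_sub_add_one_le_one h
  calc 1 - (K : ℝ) ^ 2 / (P - K + 1) = 1 + K * -(K / (P - K + 1 : ℝ)) := by ring
    _ ≤ (1 + -(K / (P - K + 1 : ℝ))) ^ K := one_add_mul_le_pow (by linarith) K
    _ = ∏ _i ∈ range K, (1 - K / (P - K + 1 : ℝ)) := by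
        rw [prod_const, card_range]
        ring
    _ ≤ ∏ i ∈ range K, (1 - K / (P - i : ℝ)) := prod_le_prod
          (fun _ _ => sub_nonneg.2 (div_sub_add_one_le_one h))
          (fun i hi => (qKP_factor_bounds h (mem_range.1 hi)).1)
    _ = qKP K P := (qKP_eq_prod h).symm

theorem two_mul_le_of_sq_lt {K P : ℕ} (hK : 0 < K) (h : K ^ 2 < P) : 2 * K ≤ P := by
  nlinarith

theorem one_sub_qKP_le {K P : ℕ} (hK : 0 < K) (h : K ^ 2 < P) :
    1 - qKP K P ≤ (K : ℝ) ^ 2 / P / (1 - (K : ℝ) ^ 2 / P) := by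
  have hKP := one_sub_sq_div_le_qKP (two_mul_le_of_sq_lt hK h)
  have hK : (1 : ℝ) ≤ K := by exact_mod_cast hK
  have h : (K : ℝ) ^ 2 < P := by exact_mod_cast h
  have hP : (0 : ℝ) < P := by nlinarith
  calc 1 - qKP K P ≤ (K : ℝ) ^ 2 / (P - K + 1) := by linarith
    _ ≤ (K : ℝ) ^ 2 / (P - K ^ 2) := by gcongr; nlinarith
    _ = (K : ℝ) ^ 2 / P / (1 - (K : ℝ) ^ 2 / P) := by field_simp

theorem sq_div_div_one_add_le_one_sub_qKP (K P : ℕ) :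
    (K : ℝ) ^ 2 / P / (1 + (K : ℝ) ^ 2 / P) ≤ 1 - qKP K P := by
  have hr : 0 ≤ (K : ℝ) ^ 2 / P := by positivity
  calc (K : ℝ) ^ 2 / P / (1 + (K : ℝ) ^ 2 / P) = 1 - (1 + (K : ℝ) ^ 2 / P)⁻¹ := by
        field_simp; ring
    _ ≤ 1 - qKP K P := by linarith [qKP_le_inv_one_add_sq_div K P]

theorem sq_div_le_inv_qKP_sub_one {K P : ℕ} (hq : 0 < qKP K P) :
    (K : ℝ) ^ 2 / P ≤ (qKP K P)⁻¹ - 1 := by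
  rw [le_sub_iff_add_le, add_comm]
  exact (le_inv_comm₀ hq (by positivity)).1 (qKP_le_inv_one_add_sq_div K P)

theorem tendsto_div_nhds_one_of_bounds {α : Type*} {l : Filter α} {f r : α → ℝ}
    (hr : Tendsto r l (𝓝 0)) (hpos : ∀ᶠ x in l, 0 < r x)
    (hlow : ∀ᶠ x in l, r x / (1 + r x) ≤ f x) (hup : ∀ᶠ x in l, f x ≤ r x / (1 - r x)) :
    Tendsto (fun x => f x / r x) l (𝓝 1) := by
  have hlim : ∀ c : ℝ, Tendsto (fun x => (1 + c * r x)⁻¹) l (𝓝 1) := fun c => by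
    simpa using ((hr.const_mul c).const_add 1).inv₀ (by simp)
  refine tendsto_of_tendsto_of_tendsto_of_le_of_le' (hlim 1) (hlim (-1)) ?_ ?_
  · filter_upwards [hpos, hlow] with x hx hf
    simpa [div_div_cancel_left' hx.ne'] using div_le_div_of_nonneg_right hf hx.le
  · filter_upwards [hpos, hup] with x hx hf
    simpa [div_div_cancel_left' hx.ne', sub_eq_add_neg] using div_le_div_of_nonneg_right hf hx.le

theorem q_to_one_iff_and_asymptotics (K P : ℕ → ℕ)
    (hK : ∀ n, 0 < K n) (hKP : ∀ n, K n ≤ P n) :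
    (Tendsto (fun n => qKP (K n) (P n)) atTop (nhds 1) ↔
      Tendsto (fun n => ((K n : ℝ) ^ 2) / (P n : ℝ)) atTop (nhds 0))
    ∧
    (Tendsto (fun n => ((K n : ℝ) ^ 2) / (P n : ℝ)) atTop (nhds 0) →
      Tendsto (fun n => (1 - qKP (K n) (P n)) / (((K n : ℝ) ^ 2) / (P n : ℝ)))
        atTop (nhds 1)) := by
  have hr_pos (n : ℕ) : 0 < (K n : ℝ) ^ 2 / P n :=
    div_pos (pow_pos (Nat.cast_pos.2 (hK n)) 2) (Nat.cast_pos.2 ((hK n).trans_le (hKP n)))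
  have asymp (hr : Tendsto (fun n => ((K n : ℝ) ^ 2) / (P n : ℝ)) atTop (𝓝 0)) :
      Tendsto (fun n => (1 - qKP (K n) (P n)) / (((K n : ℝ) ^ 2) / (P n : ℝ)))
        atTop (𝓝 1) := by
    refine tendsto_div_nhds_one_of_bounds hr (.of_forall hr_pos)
      (.of_forall fun n => sq_div_div_one_add_le_one_sub_qKP _ _) ?_
    filter_upwards [hr.eventually_lt_const one_pos] with n hn
    refine one_sub_qKP_le (hK n) ?_
    exact_mod_cast (div_lt_one (by exact_mod_cast (hK n).trans_le (hKP n))).1 hn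
  refine ⟨⟨fun hq => ?_, fun hr => ?_⟩, asymp⟩
  · refine tendsto_of_tendsto_of_tendsto_of_le_of_le' tendsto_const_nhds
      (by simpa using (hq.inv₀ one_ne_zero).sub_const 1) (.of_forall fun n => (hr_pos n).le) ?_
    filter_upwards [hq.eventually_const_lt one_pos] with n hn
    exact sq_div_le_inv_qKP_sub_one hn
  · have h := ((asymp hr).mul hr).const_sub 1
    rw [one_mul, sub_zero] at h
    refine h.congr fun n => ?_
    rw [div_mul_cancel₀ _ (hr_pos n).ne', sub_sub_cancel]
end

section
/- Let K, P : ℕ → ℕ with K_n ≤ P_n, K_n²/P_n → 0, and 3K_n ≤ P_n eventually. Then 1 − r(K_n,P_n)/q(K_n,P_n)² is asymptotically equivalent to K_n³/P_n². -/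
/-!
Writing the binomial coefficients as descending factorials,
`r / q² = ∏_{i < K} (1 - xᵢ)` with `xᵢ = (K / (P - K - i))²`, because
`(P - K - i)² - K² = (P - 2K - i) (P - i)`. Each `xᵢ` lies between `(K / P)²` and
`(K / (P - 2K))²`, so `S = ∑ xᵢ` equals `K³ / P²` up to a factor between `1` and
`(1 - 2K / P)⁻² → 1`; in particular `S → 0`. The Weierstrass product inequality and
`∏ (1 - xᵢ) ≤ exp (-S) ≤ 1 - S + S²` give `S (1 - S) ≤ 1 - r / q² ≤ S`, which squeezes
`(1 - r / q²) / (K³ / P²)` between `1 - S` and `(1 - 2K / P)⁻²`.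
-/

open Filter

open Finset

section ProductBounds

variable {ι : Type*} (s : Finset ι) {f : ι → ℝ}

theorem one_sub_sum_le_prod_one_sub (h0 : ∀ i ∈ s, 0 ≤ f i) (h1 : ∀ i ∈ s, f i ≤ 1) :
    1 - ∑ i ∈ s, f i ≤ ∏ i ∈ s, (1 - f i) := by
  classical
  induction s using Finset.induction_on with
  | empty => simp
  | insert a s ha ih =>
    rw [sum_insert ha, prod_insert ha]
    have hs := ih (fun i hi ↦ h0 i (mem_insert_of_mem hi)) (fun i hi ↦ h1 i (mem_insert_of_mem hi))
    have hfa0 := h0 a (mem_insert_self a s)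
    have hfa1 := h1 a (mem_insert_self a s)
    have hsum : 0 ≤ ∑ i ∈ s, f i := sum_nonneg fun i hi ↦ h0 i (mem_insert_of_mem hi)
    nlinarith

theorem prod_one_sub_le_exp_neg_sum (h1 : ∀ i ∈ s, f i ≤ 1) :
    ∏ i ∈ s, (1 - f i) ≤ Real.exp (-∑ i ∈ s, f i) := by
  rw [← sum_neg_distrib, Real.exp_sum]
  exact prod_le_prod (fun i hi ↦ sub_nonneg.2 (h1 i hi)) fun i _ ↦ Real.one_sub_le_exp_neg _

theorem sum_mul_one_sub_sum_le_one_sub_prod (h0 : ∀ i ∈ s, 0 ≤ f i) (h1 : ∀ i ∈ s, f i ≤ 1) :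
    (∑ i ∈ s, f i) * (1 - ∑ i ∈ s, f i) ≤ 1 - ∏ i ∈ s, (1 - f i) := by
  set S := ∑ i ∈ s, f i
  have hS : 0 ≤ S := sum_nonneg h0
  have hprod := prod_one_sub_le_exp_neg_sum s h1
  rcases le_or_gt S 1 with hS1 | hS1
  · -- `exp (-S) ≤ 1 - S + S ^ 2`
    have := Real.abs_exp_sub_one_sub_id_le (x := -S) (by rwa [abs_neg, abs_of_nonneg hS])
    nlinarith [abs_le.1 this]
  · nlinarith [Real.exp_le_one_iff.2 (neg_nonpos.2 hS)]

end ProductBounds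

theorem choose_div_choose_eq_descFactorial_div (a b k : ℕ) :
    (a.choose k : ℝ) / b.choose k = (a.descFactorial k : ℝ) / b.descFactorial k := by
  simp only [Nat.descFactorial_eq_factorial_mul_choose, Nat.cast_mul]
  rw [mul_div_mul_left _ _ (by positivity)]

theorem cast_descFactorial_eq_prod {n k : ℕ} (h : k ≤ n) :
    (n.descFactorial k : ℝ) = ∏ i ∈ range k, ((n : ℝ) - i) := by
  rw [Nat.descFactorial_eq_prod_range, Nat.cast_prod]
  exact prod_congr rfl fun i hi ↦ Nat.cast_sub (by simp at hi; omega)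

section BinomialRatio

variable {k p : ℕ}

theorem sub_sub_bounds_of_three_mul_le (h3 : 3 * k ≤ p) {i : ℕ} (hi : i ∈ range k) :
    0 < (k : ℝ) ∧ (k : ℝ) ≤ p - 2 * k ∧ (p : ℝ) - 2 * k ≤ p - k - i ∧ (p : ℝ) - k - i ≤ p := by
  have hik : (i : ℝ) < k := by exact_mod_cast mem_range.1 hi
  have : (3 * k : ℝ) ≤ p := by exact_mod_cast h3
  refine ⟨by linarith [Nat.cast_nonneg (α := ℝ) i], by linarith, by linarith,
    by linarith [Nat.cast_nonneg (α := ℝ) k]⟩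

theorem rKP_div_qKP_sq (h3 : 3 * k ≤ p) :
    rKP k p / qKP k p ^ 2 = ∏ i ∈ range k, (1 - ((k : ℝ) / (p - k - i)) ^ 2) := by
  have hden : ∀ i ∈ range k, (p : ℝ) - k - i ≠ 0 := fun i hi ↦ by
    obtain ⟨hk, h2k, hki, -⟩ := sub_sub_bounds_of_three_mul_le h3 hi
    linarith
  have hp : ∏ i ∈ range k, ((p : ℝ) - i) ≠ 0 := prod_ne_zero_iff.2 fun i hi ↦ by
    obtain ⟨hk, h2k, hki, -⟩ := sub_sub_bounds_of_three_mul_le h3 hi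
    linarith
  rw [rKP, qKP, if_pos h3, if_pos (by omega), choose_div_choose_eq_descFactorial_div,
    choose_div_choose_eq_descFactorial_div, cast_descFactorial_eq_prod (n := p) (by omega),
    cast_descFactorial_eq_prod (n := p - k) (by omega),
    cast_descFactorial_eq_prod (n := p - 2 * k) (by omega),
    Nat.cast_sub (by omega), Nat.cast_sub (by omega)]
  calc _ = ∏ i ∈ range k, ((p - 2 * k - i) * (p - i) / ((p : ℝ) - k - i) ^ 2) := by
        rw [prod_div_distrib, prod_mul_distrib, prod_pow, div_pow]
        field_simp [prod_ne_zero_iff.2 hden]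
        push_cast; ring_nf
    _ = _ := prod_congr rfl fun i hi ↦ by field_simp [hden i hi]; ring

noncomputable def sqRatioSum (k p : ℕ) : ℝ := ∑ i ∈ range k, ((k : ℝ) / (p - k - i)) ^ 2

theorem sq_div_le_sq_div_sub_sub (h3 : 3 * k ≤ p) {i : ℕ} (hi : i ∈ range k) :
    ((k : ℝ) / p) ^ 2 ≤ ((k : ℝ) / (p - k - i)) ^ 2 := by
  obtain ⟨hk, h2k, hki, hip⟩ := sub_sub_bounds_of_three_mul_le h3 hi
  have : 0 < (p : ℝ) - k - i := by linarith
  gcongr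

theorem sq_div_sub_sub_le_sq_div_sub (h3 : 3 * k ≤ p) {i : ℕ} (hi : i ∈ range k) :
    ((k : ℝ) / (p - k - i)) ^ 2 ≤ ((k : ℝ) / (p - 2 * k)) ^ 2 := by
  obtain ⟨hk, h2k, hki, -⟩ := sub_sub_bounds_of_three_mul_le h3 hi
  have : 0 < (p : ℝ) - 2 * k := by linarith
  gcongr
  exact div_nonneg hk.le (by linarith)

theorem sq_div_sub_sub_le_one (h3 : 3 * k ≤ p) {i : ℕ} (hi : i ∈ range k) :
    ((k : ℝ) / (p - k - i)) ^ 2 ≤ 1 := by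
  obtain ⟨hk, h2k, -, -⟩ := sub_sub_bounds_of_three_mul_le h3 hi
  refine (sq_div_sub_sub_le_sq_div_sub h3 hi).trans ?_
  exact pow_le_one₀ (div_nonneg hk.le (by linarith)) (div_le_one_of_le₀ h2k (by linarith))

theorem cube_div_sq_le_sqRatioSum (h3 : 3 * k ≤ p) : (k : ℝ) ^ 3 / p ^ 2 ≤ sqRatioSum k p := by
  calc (k : ℝ) ^ 3 / p ^ 2 = #(range k) • ((k : ℝ) / p) ^ 2 := by
        rw [card_range, nsmul_eq_mul]; ring
    _ ≤ sqRatioSum k p := card_nsmul_le_sum _ _ _ fun i hi ↦ sq_div_le_sq_div_sub_sub h3 hi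

theorem sqRatioSum_le (hk : 0 < k) (h3 : 3 * k ≤ p) :
    sqRatioSum k p ≤ (k : ℝ) ^ 3 / p ^ 2 * ((1 - 2 * ((k : ℝ) / p)) ^ 2)⁻¹ := by
  obtain ⟨hk', h2k, -, -⟩ := sub_sub_bounds_of_three_mul_le h3 (mem_range.2 hk)
  have hp : (0 : ℝ) < p := by linarith
  calc sqRatioSum k p ≤ #(range k) • ((k : ℝ) / (p - 2 * k)) ^ 2 :=
        sum_le_card_nsmul _ _ _ fun i hi ↦ sq_div_sub_sub_le_sq_div_sub h3 hi
    _ = (k : ℝ) ^ 3 / p ^ 2 * ((1 - 2 * ((k : ℝ) / p)) ^ 2)⁻¹ := by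
        have : (p : ℝ) - 2 * k ≠ 0 := by linarith
        rw [card_range, nsmul_eq_mul]
        field_simp

theorem one_sub_sqRatioSum_le (hk : 0 < k) (h3 : 3 * k ≤ p) (hS : sqRatioSum k p ≤ 1) :
    1 - sqRatioSum k p ≤ (1 - rKP k p / qKP k p ^ 2) / ((k : ℝ) ^ 3 / p ^ 2) := by
  have hp : 0 < p := by omega
  rw [le_div_iff₀ (by positivity), rKP_div_qKP_sq h3]
  have hprod := sum_mul_one_sub_sum_le_one_sub_prod (range k) (fun i _ ↦ by positivity)
    fun i hi ↦ sq_div_sub_sub_le_one h3 hi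
  have hT := mul_le_mul_of_nonneg_left (cube_div_sq_le_sqRatioSum h3) (sub_nonneg.2 hS)
  rw [sqRatioSum] at hT ⊢
  linarith

theorem one_sub_rKP_div_qKP_sq_div_le (hk : 0 < k) (h3 : 3 * k ≤ p) :
    (1 - rKP k p / qKP k p ^ 2) / ((k : ℝ) ^ 3 / p ^ 2) ≤ ((1 - 2 * ((k : ℝ) / p)) ^ 2)⁻¹ := by
  have hp : 0 < p := by omega
  rw [div_le_iff₀ (by positivity), rKP_div_qKP_sq h3, mul_comm]
  have hprod := one_sub_sum_le_prod_one_sub (range k) (fun i _ ↦ by positivity)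
    fun i hi ↦ sq_div_sub_sub_le_one h3 hi
  have hS := sqRatioSum_le hk h3
  rw [sqRatioSum] at hS
  linarith

end BinomialRatio

theorem tendsto_div_of_tendsto_sq_div {ι : Type*} {l : Filter ι} {K P : ι → ℕ}
    (hK : ∀ n, 0 < K n) (hlim : Tendsto (fun n ↦ (K n : ℝ) ^ 2 / P n) l (nhds 0)) :
    Tendsto (fun n ↦ (K n : ℝ) / P n) l (nhds 0) :=
  squeeze_zero (fun n ↦ by positivity) (fun n ↦ by
    have : (1 : ℝ) ≤ K n := by exact_mod_cast hK n
    gcongr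
    nlinarith) hlim

theorem one_sub_r_div_q_sq_asymptotics_general (K P : ℕ → ℕ)
    (hK : ∀ n, 0 < K n)
    (hlim : Tendsto (fun n => ((K n : ℝ) ^ 2) / (P n : ℝ)) atTop (nhds 0))
    (h3K : ∀ᶠ n in atTop, 3 * K n ≤ P n) :
    Tendsto (fun n =>
        (1 - rKP (K n) (P n) / (qKP (K n) (P n)) ^ 2) / ((K n : ℝ) ^ 3 / (P n : ℝ) ^ 2))
      atTop (nhds 1) := by
  have hKP := tendsto_div_of_tendsto_sq_div hK hlim
  have hcube : Tendsto (fun n ↦ (K n : ℝ) ^ 3 / P n ^ 2) atTop (nhds 0) := by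
    have := hlim.mul hKP
    rw [mul_zero] at this
    exact this.congr fun n ↦ by ring
  have hupper : Tendsto (fun n ↦ ((1 - 2 * ((K n : ℝ) / P n)) ^ 2)⁻¹) atTop (nhds 1) := by
    simpa using (((hKP.const_mul 2).const_sub 1).pow 2).inv₀ (by norm_num)
  have hsum : Tendsto (fun n ↦ sqRatioSum (K n) (P n)) atTop (nhds 0) := by
    refine squeeze_zero' (.of_forall fun n ↦ sum_nonneg fun i _ ↦ by positivity) ?_
      (by simpa using hcube.mul hupper)
    filter_upwards [h3K] with n h3 using sqRatioSum_le (hK n) h3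
  refine tendsto_of_tendsto_of_tendsto_of_le_of_le' (by simpa using hsum.const_sub 1) hupper ?_ ?_
  · filter_upwards [h3K, hsum.eventually (ge_mem_nhds one_pos)] with n h3 hS
    exact one_sub_sqRatioSum_le (hK n) h3 hS
  · filter_upwards [h3K] with n h3 using one_sub_rKP_div_qKP_sq_div_le (hK n) h3

theorem one_sub_r_div_q_sq_asymptotics (K P : ℕ → ℕ)
    (hK : ∀ n, 0 < K n) (hKP : ∀ n, K n ≤ P n)
    (hlim : Tendsto (fun n => ((K n : ℝ) ^ 2) / (P n : ℝ)) atTop (nhds 0))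
    (h3K : ∀ᶠ n in atTop, 3 * K n ≤ P n) :
    Tendsto (fun n =>
        (1 - rKP (K n) (P n) / (qKP (K n) (P n)) ^ 2) / ((K n : ℝ) ^ 3 / (P n : ℝ) ^ 2))
      atTop (nhds 1) :=
  one_sub_r_div_q_sq_asymptotics_general K P hK hlim h3K
end

section
/- Let K, P : ℕ → ℕ be sequences with K_n ≤ P_n such that q(K_n,P_n) → q* with 0 ≤ q* < 1. Then the probability that the random key graph K(n; K_n,P_n) contains at least one triangle tends to 1 as n → ∞. -/
/-!
If the key assignment has no triangle, its intersection graph is triangle-free, so some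
`t ≈ √n` nodes have pairwise disjoint key rings. For a fixed set of `t` nodes this happens with
probability `∏_{i<t} C(P - iK, K) / C(P, K) ≤ q^(t(t-1)/2)`, because `C(m - K, K) / C(m, K)`
increases with `m`. A union bound over the `C(n, t) ≤ nᵗ` sets of nodes bounds the probability
of no triangle by `nᵗ q^(t(t-1)/2)`, which tends to `0` for `t = ⌊√n⌋` once `q` stays below some
`c < 1`.
-/

open Finset Filter

/-- Sample space of the random key graph: assignments of a `K`-subset of the key pool
`Fin P` to each of the `n` nodes (all equally likely). -/
def keySpace (n K P : ℕ) : Finset (Fin n → Finset (Fin P)) :=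
  Fintype.piFinset (fun _ => Finset.univ.powersetCard K)

/-- The key assignment `f` contains a triangle: three distinct nodes with pairwise
intersecting key rings. -/
def hasTriangle (n P : ℕ) (f : Fin n → Finset (Fin P)) : Prop :=
  ∃ i j k : Fin n, i ≠ j ∧ i ≠ k ∧ j ≠ k ∧
    (f i ∩ f j).Nonempty ∧ (f i ∩ f k).Nonempty ∧ (f j ∩ f k).Nonempty

instance (n P : ℕ) (f : Fin n → Finset (Fin P)) : Decidable (hasTriangle n P f) := by
  unfold hasTriangle; infer_instance

open Function

theorem tsub_mul_le_tsub_mul_of_le {a b : ℕ} (k : ℕ) (hab : a ≤ b) :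
    (a - k) * b ≤ (b - k) * a := by
  rw [Nat.sub_mul, Nat.sub_mul, Nat.mul_comm a b]
  exact Nat.sub_le_sub_left (Nat.mul_le_mul_left k hab) _

/-- `C(m - k, k) / C(m, k)` is monotone in `m`; compare the products `m (m - 1) ⋯`. -/
theorem choose_sub_mul_choose_le {m p : ℕ} (k : ℕ) (h : m ≤ p) :
    (m - k).choose k * p.choose k ≤ (p - k).choose k * m.choose k := by
  have hdesc : (m - k).descFactorial k * p.descFactorial k
      ≤ (p - k).descFactorial k * m.descFactorial k := by
    simp only [Nat.descFactorial_eq_prod_range, ← prod_mul_distrib]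
    refine prod_le_prod' fun j _ => ?_
    rw [Nat.sub_right_comm m k j, Nat.sub_right_comm p k j]
    exact tsub_mul_le_tsub_mul_of_le k (Nat.sub_le_sub_right h j)
  simp only [Nat.descFactorial_eq_factorial_mul_choose] at hdesc
  refine Nat.le_of_mul_le_mul_left ?_ (Nat.mul_pos k.factorial_pos k.factorial_pos)
  linarith

theorem qKP_nonneg_s12 (k p : ℕ) : 0 ≤ qKP k p := by
  unfold qKP; split <;> positivity

theorem choose_sub_div_choose_le_qKP_mul {m p : ℕ} (k : ℕ) (h : m ≤ p) :
    ((m - k).choose k : ℝ) / p.choose k ≤ qKP k p * ((m.choose k : ℝ) / p.choose k) := by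
  by_cases h2 : 2 * k ≤ p
  · rw [qKP, if_pos h2]
    rcases eq_or_ne (p.choose k : ℝ) 0 with hC | hC
    · simp [hC]
    calc ((m - k).choose k : ℝ) / p.choose k
        = ((m - k).choose k * p.choose k : ℝ) / (p.choose k * p.choose k) := by field_simp
      _ ≤ ((p - k).choose k * m.choose k : ℝ) / (p.choose k * p.choose k) := by
          gcongr ?_ / _; exact_mod_cast choose_sub_mul_choose_le k h
      _ = _ := by ring
  · rw [Nat.choose_eq_zero_of_lt (by omega : m - k < k), Nat.cast_zero, zero_div]
    exact mul_nonneg (qKP_nonneg_s12 k p) (by positivity)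

theorem choose_sub_mul_div_choose_le_qKP_pow (k p i : ℕ) :
    ((p - i * k).choose k : ℝ) / p.choose k ≤ qKP k p ^ i := by
  induction i with
  | zero =>
    rcases eq_or_ne (p.choose k : ℝ) 0 with hC | hC <;> simp [hC]
  | succ i ih =>
    calc ((p - (i + 1) * k).choose k : ℝ) / p.choose k
        = ((p - i * k - k).choose k : ℝ) / p.choose k := by rw [Nat.succ_mul, Nat.sub_sub]
      _ ≤ qKP k p * (((p - i * k).choose k : ℝ) / p.choose k) :=
          choose_sub_div_choose_le_qKP_mul k (Nat.sub_le p _)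
      _ ≤ qKP k p * qKP k p ^ i := by gcongr; exact qKP_nonneg_s12 k p
      _ = qKP k p ^ (i + 1) := (pow_succ' _ _).symm

namespace SimpleGraph

/-- Either a vertex has `t + 1` neighbours, which are independent as `G` has no triangle, or
it is independent of all but at most `t` other vertices, and induction applies to those. -/
theorem exists_isIndepSet_card_eq_of_cliqueFree_three {V : Type*} (G : SimpleGraph V)
    (hG : G.CliqueFree 3) (t : ℕ) :
    ∀ X : Finset V, t * (t + 1) ≤ 2 * #X → ∃ T ⊆ X, #T = t ∧ G.IsIndepSet T := by
  classical
  induction t with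
  | zero => exact fun _ _ => ⟨∅, empty_subset _, rfl, by simp⟩
  | succ t ih =>
    intro X hX
    obtain ⟨a, ha⟩ : X.Nonempty := card_pos.1 (by nlinarith)
    set N := (X.erase a).filter (G.Adj a)
    set R := (X.erase a).filter (¬G.Adj a ·)
    have hNR : #N + #R + 1 = #X := by
      rw [card_filter_add_card_filter_not, card_erase_add_one ha]
    by_cases hN : t + 1 ≤ #N
    · obtain ⟨T, hTN, hT⟩ := exists_subset_card_eq hN
      refine ⟨T, hTN.trans ((filter_subset _ _).trans (erase_subset _ _)), hT, ?_⟩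
      exact (G.isIndepSet_neighborSet_of_triangleFree hG a).mono
        fun b hb => (mem_filter.1 (hTN hb)).2
    · obtain ⟨T, hTR, hT, hTind⟩ := ih R (by nlinarith)
      have haT : a ∉ T := fun h => by simpa using (mem_filter.1 (hTR h)).1
      refine ⟨insert a T, insert_subset ha ((hTR.trans (filter_subset _ _)).trans
        (erase_subset _ _)), by rw [card_insert_of_notMem haT, hT], ?_⟩
      rw [coe_insert, IsIndepSet, Set.pairwise_insert]
      refine ⟨hTind, fun b hb _ => ?_⟩
      have hab := (mem_filter.1 (hTR hb)).2
      exact ⟨hab, by rwa [G.adj_comm]⟩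

end SimpleGraph

section DisjointFamilies

variable {ι α : Type*} [Fintype ι] [DecidableEq ι]

open Classical in
noncomputable def disjointFamilies (D : ι → Finset (Finset α)) (T : Finset ι) :
    Finset (ι → Finset α) :=
  {f ∈ Fintype.piFinset D | (T : Set ι).PairwiseDisjoint f}

@[simp]
theorem mem_disjointFamilies {D : ι → Finset (Finset α)} {T : Finset ι}
    {f : ι → Finset α} :
    f ∈ disjointFamilies D T ↔ (∀ i, f i ∈ D i) ∧ (T : Set ι).PairwiseDisjoint f := by
  simp [disjointFamilies]

theorem prod_card_update_sdiff (D : ι → Finset (Finset α)) {a : ι} {T : Finset ι}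
    (ha : a ∉ T) :
    ∏ i ∈ univ \ T, #(update D a {∅} i) = ∏ i ∈ univ \ insert a T, #(D i) := by
  have : univ \ T = insert a (univ \ insert a T) := by
    ext i; rcases eq_or_ne i a with rfl | hi <;> simp [*]
  rw [this, prod_insert (by simp), update_self, card_singleton, one_mul]
  exact prod_congr rfl fun i hi => by rw [update_of_ne (by aesop)]

theorem update_mem_disjointFamilies {D : ι → Finset (Finset α)} {a : ι} {T : Finset ι}
    {f : ι → Finset α} (hf : f ∈ disjointFamilies D (insert a T)) :
    update f a ∅ ∈ disjointFamilies (update D a {∅}) T := by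
  rw [mem_disjointFamilies] at hf ⊢
  refine ⟨fun i => ?_, ?_⟩
  · rcases eq_or_ne i a with rfl | hi
    · simp
    · simpa [update_of_ne hi] using hf.1 i
  · refine (hf.2.subset (by simp)).mono fun i => ?_
    rcases eq_or_ne i a with rfl | hi
    · simp
    · rw [update_of_ne hi]

/-- Once the other rings are fixed, the ring of `a` is a `k`-subset of the keys not used on
`T`, and these are `#T * k` many. -/
theorem card_fiber_update_le [Fintype α] [DecidableEq α] {k : ℕ} {D : ι → Finset (Finset α)}
    {a : ι} {T : Finset ι} (ha : a ∉ T) (hD : ∀ b ∈ insert a T, D b ⊆ univ.powersetCard k)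
    {f₀ : ι → Finset α} (hf₀ : f₀ ∈ disjointFamilies D (insert a T)) :
    #{f ∈ disjointFamilies D (insert a T) | update f a ∅ = update f₀ a ∅}
      ≤ (Fintype.card α - #T * k).choose k := by
  have hcard : ∀ f ∈ disjointFamilies D (insert a T), ∀ b ∈ insert a T, #(f b) = k :=
    fun f hf b hb => (mem_powersetCard.1 (hD b hb ((mem_disjointFamilies.1 hf).1 b))).2
  have hdisj : ∀ f ∈ disjointFamilies D (insert a T), (T : Set ι).PairwiseDisjoint f ∧
      ∀ b ∈ T, Disjoint (f a) (f b) := by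
    intro f hf
    have := (mem_disjointFamilies.1 hf).2
    rw [coe_insert, Set.pairwiseDisjoint_insert] at this
    exact ⟨this.1, fun b hb => this.2 b hb (fun h => ha (h ▸ hb))⟩
  have hU : #(T.biUnion f₀) = #T * k := by
    rw [card_biUnion (hdisj f₀ hf₀).1, sum_const_nat fun b hb =>
      hcard f₀ hf₀ b (mem_insert_of_mem hb)]
  calc _ ≤ #((univ \ T.biUnion f₀).powersetCard k) := by
        refine card_le_card_of_injOn (· a) (fun f hf => ?_)
          (fun f₁ hf₁ f₂ hf₂ (h : f₁ a = f₂ a) => ?_)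
        · obtain ⟨hf, hfib⟩ := mem_filter.1 hf
          refine mem_powersetCard.2 ⟨fun x hx => mem_sdiff.2 ⟨mem_univ x, fun hxU => ?_⟩,
            hcard f hf a (mem_insert_self a T)⟩
          obtain ⟨b, hb, hxb⟩ := mem_biUnion.1 hxU
          have hfb : f₀ b = f b := by
            simpa [update_of_ne (fun h : b = a => ha (h ▸ hb))] using congrFun hfib.symm b
          exact disjoint_left.1 ((hdisj f hf).2 b hb) hx (hfb ▸ hxb)
        · have h₁ := (mem_filter.1 hf₁).2
          have h₂ := (mem_filter.1 hf₂).2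
          calc f₁ = update (update f₁ a ∅) a (f₁ a) := by simp
            _ = update (update f₂ a ∅) a (f₂ a) := by rw [h₁.trans h₂.symm, h]
            _ = f₂ := by simp
    _ = _ := by rw [card_powersetCard, card_sdiff_of_subset (subset_univ _), card_univ, hU]

theorem card_disjointFamilies_le [Fintype α] [DecidableEq α] (k : ℕ) (T : Finset ι) :
    ∀ D : ι → Finset (Finset α), (∀ b ∈ T, D b ⊆ univ.powersetCard k) →
      #(disjointFamilies D T) ≤
        (∏ i ∈ range #T, (Fintype.card α - i * k).choose k) * ∏ i ∈ univ \ T, #(D i) := by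
  induction T using Finset.induction_on with
  | empty => intro D _; simp [disjointFamilies, Fintype.card_piFinset]
  | @insert a T ha ih =>
    intro D hD
    calc #(disjointFamilies D (insert a T))
        ≤ (Fintype.card α - #T * k).choose k *
            #((disjointFamilies D (insert a T)).image (update · a ∅)) := by
          refine card_le_mul_card_image _ _ fun g hg => ?_
          obtain ⟨f₀, hf₀, rfl⟩ := mem_image.1 hg
          exact card_fiber_update_le ha hD hf₀
      _ ≤ (Fintype.card α - #T * k).choose k * #(disjointFamilies (update D a {∅}) T) := by
          gcongr
          exact image_subset_iff.2 fun f hf => update_mem_disjointFamilies hf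
      _ ≤ (Fintype.card α - #T * k).choose k *
            ((∏ i ∈ range #T, (Fintype.card α - i * k).choose k) *
              ∏ i ∈ univ \ T, #(update D a {∅} i)) := by
          gcongr
          refine ih _ fun b hb => ?_
          rw [update_of_ne (fun h : b = a => ha (h ▸ hb))]
          exact hD b (mem_insert_of_mem hb)
      _ = _ := by
          rw [prod_card_update_sdiff D ha, card_insert_of_notMem ha, prod_range_succ]
          ring

end DisjointFamilies

def intersectionGraph {ι α : Type*} (f : ι → Finset α) : SimpleGraph ι where
  Adj i j := i ≠ j ∧ ¬Disjoint (f i) (f j)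
  symm := ⟨fun _ _ h => ⟨h.1.symm, fun hd => h.2 hd.symm⟩⟩
  loopless := ⟨fun _ h => h.1 rfl⟩

@[simp]
theorem intersectionGraph_adj {ι α : Type*} {f : ι → Finset α} {i j : ι} :
    (intersectionGraph f).Adj i j ↔ i ≠ j ∧ ¬Disjoint (f i) (f j) :=
  Iff.rfl

theorem isIndepSet_intersectionGraph_iff {ι α : Type*} {f : ι → Finset α} {s : Set ι} :
    (intersectionGraph f).IsIndepSet s ↔ s.PairwiseDisjoint f := by
  simp [SimpleGraph.IsIndepSet, Set.PairwiseDisjoint, Set.Pairwise, onFun]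

theorem cliqueFree_three_intersectionGraph {n p : ℕ} {f : Fin n → Finset (Fin p)}
    (h : ¬hasTriangle n p f) : (intersectionGraph f).CliqueFree 3 := by
  intro s hs
  obtain ⟨i, j, k, hij, hik, hjk, -⟩ := SimpleGraph.is3Clique_iff.1 hs
  simp only [intersectionGraph_adj, not_disjoint_iff_nonempty_inter] at hij hik hjk
  exact h ⟨i, j, k, hij.1, hik.1, hjk.1, hij.2, hik.2, hjk.2⟩

theorem card_keySpace (n k p : ℕ) : #(keySpace n k p) = p.choose k ^ n := by
  simp [keySpace, Fintype.card_piFinset]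

theorem filter_not_hasTriangle_subset {n k p t : ℕ} (ht : t * (t + 1) ≤ 2 * n) :
    {f ∈ keySpace n k p | ¬hasTriangle n p f} ⊆
      (univ.powersetCard t).biUnion (disjointFamilies fun _ => univ.powersetCard k) := by
  intro f hf
  obtain ⟨hf, hno⟩ := mem_filter.1 hf
  obtain ⟨T, -, hT, hind⟩ :=
    (intersectionGraph f).exists_isIndepSet_card_eq_of_cliqueFree_three
      (cliqueFree_three_intersectionGraph hno) t univ (by simpa using ht)
  exact mem_biUnion.2 ⟨T, mem_powersetCard.2 ⟨subset_univ T, hT⟩,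
    mem_disjointFamilies.2
      ⟨Fintype.mem_piFinset.1 hf, isIndepSet_intersectionGraph_iff.1 hind⟩⟩

theorem card_filter_not_hasTriangle_le {n k p t : ℕ} (ht : t * (t + 1) ≤ 2 * n) :
    #{f ∈ keySpace n k p | ¬hasTriangle n p f} ≤
      n.choose t * ((∏ i ∈ range t, (p - i * k).choose k) * p.choose k ^ (n - t)) := by
  calc #{f ∈ keySpace n k p | ¬hasTriangle n p f}
      ≤ ∑ T ∈ univ.powersetCard t,
          #(disjointFamilies (fun _ : Fin n => univ.powersetCard k) T) :=
        (card_le_card (filter_not_hasTriangle_subset ht)).trans card_biUnion_le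
    _ ≤ ∑ T ∈ univ.powersetCard t,
          (∏ i ∈ range t, (p - i * k).choose k) * p.choose k ^ (n - t) := by
        refine sum_le_sum fun T hT => ?_
        have hT := (mem_powersetCard.1 hT).2
        have := card_disjointFamilies_le k T
          (fun _ : Fin n => (univ : Finset (Fin p)).powersetCard k) fun _ _ => subset_rfl
        simpa [card_sdiff_of_subset, hT] using this
    _ = _ := by simp

theorem card_filter_not_hasTriangle_div_le {n k p t : ℕ} (hkp : k ≤ p)
    (ht : t * (t + 1) ≤ 2 * n) :
    (#{f ∈ keySpace n k p | ¬hasTriangle n p f} : ℝ) / #(keySpace n k p) ≤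
      n ^ t * qKP k p ^ (∑ i ∈ range t, i) := by
  have hC : (0 : ℝ) < p.choose k := by exact_mod_cast Nat.choose_pos hkp
  have htn : t ≤ n := by nlinarith
  calc (#{f ∈ keySpace n k p | ¬hasTriangle n p f} : ℝ) / #(keySpace n k p)
      ≤ (n.choose t * ((∏ i ∈ range t, ((p - i * k).choose k : ℝ)) *
          (p.choose k : ℝ) ^ (n - t))) / (p.choose k : ℝ) ^ n := by
        rw [card_keySpace, Nat.cast_pow]
        gcongr
        exact_mod_cast card_filter_not_hasTriangle_le ht
    _ = n.choose t * ∏ i ∈ range t, ((p - i * k).choose k : ℝ) / p.choose k := by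
        rw [prod_div_distrib, prod_const, card_range, ← Nat.sub_add_cancel htn, pow_add,
          Nat.add_sub_cancel]
        field_simp
    _ ≤ n ^ t * ∏ i ∈ range t, qKP k p ^ i := by
        gcongr with i
        · exact_mod_cast Nat.choose_le_pow n t
        · exact choose_sub_mul_div_choose_le_qKP_pow k p i
    _ = n ^ t * qKP k p ^ (∑ i ∈ range t, i) := by rw [prod_pow_eq_pow_sum]

theorem tendsto_pow_of_tendsto_nhds_zero {β : Type*} {l : Filter β} {a : β → ℝ} {t : β → ℕ}
    (ha0 : ∀ x, 0 ≤ a x) (ha : Tendsto a l (nhds 0)) (ht : ∀ᶠ x in l, t x ≠ 0) :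
    Tendsto (fun x => a x ^ t x) l (nhds 0) :=
  squeeze_zero' (.of_forall fun x => pow_nonneg (ha0 x) _)
    ((ha.eventually_le_const zero_lt_one).and ht |>.mono fun x hx =>
      pow_le_of_le_one (ha0 x) hx.1 hx.2) ha

theorem card_filter_div_card_eq_one_sub {α : Type*} {s : Finset α} (hs : s.Nonempty)
    (P : α → Prop) [DecidablePred P] :
    (#{x ∈ s | P x} : ℝ) / #s = 1 - #{x ∈ s | ¬P x} / #s := by
  have hcard : (#{x ∈ s | P x} : ℝ) + #{x ∈ s | ¬P x} = #s := by
    exact_mod_cast card_filter_add_card_filter_not P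
  rw [eq_sub_iff_add_eq, ← add_div, hcard, div_self (by exact_mod_cast hs.card_pos.ne')]

theorem tendsto_sqrt_sub_one_div_two_atTop :
    Tendsto (fun n => (Nat.sqrt n - 1) / 2) atTop atTop :=
  tendsto_atTop_atTop.2 fun b => ⟨(2 * b + 1) * (2 * b + 1), fun n hn => by
    have := Nat.le_sqrt.2 hn
    omega⟩

/-- With `s = √n` and `u = (s - 1) / 2` one has `s u ≤ ∑_{i<s} i` and `n ≤ 25 u²`, so the term
is at most `(25 u² c^u)^s`. -/
theorem tendsto_pow_sqrt_mul_pow_sum_range {q : ℕ → ℝ} {c : ℝ} (hq0 : ∀ n, 0 ≤ q n)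
    (hc1 : c < 1) (hqc : ∀ᶠ n in atTop, q n ≤ c) :
    Tendsto (fun n : ℕ => (n : ℝ) ^ Nat.sqrt n * q n ^ (∑ i ∈ range (Nat.sqrt n), i))
      atTop (nhds 0) := by
  obtain ⟨m, hm⟩ := hqc.exists
  have hc0 : 0 ≤ c := (hq0 m).trans hm
  set u : ℕ → ℕ := fun n => (Nat.sqrt n - 1) / 2
  have hgeom : Tendsto (fun n => 25 * ((u n : ℝ) ^ 2 * c ^ u n)) atTop (nhds 0) := by
    simpa using ((tendsto_pow_const_mul_const_pow_of_lt_one 2 hc0 hc1).comp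
      tendsto_sqrt_sub_one_div_two_atTop).const_mul 25
  have hsqrt : ∀ᶠ n in atTop, Nat.sqrt n ≠ 0 :=
    (eventually_ge_atTop 1).mono fun n hn => (Nat.sqrt_pos.2 hn).ne'
  refine squeeze_zero' (.of_forall fun n => by have := hq0 n; positivity) ?_
    (tendsto_pow_of_tendsto_nhds_zero (fun n => by positivity) hgeom hsqrt)
  filter_upwards [hqc, eventually_ge_atTop 9] with n hqn hn
  set s := Nat.sqrt n
  have hs : 3 ≤ s := Nat.le_sqrt.2 hn
  have hsu : s * u n ≤ ∑ i ∈ range s, i := by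
    rw [sum_range_id]; exact Nat.mul_div_le_mul_div_assoc s (s - 1) 2
  have hn25 : (n : ℝ) ≤ 25 * (u n : ℝ) ^ 2 := by
    have h1 : n < (s + 1) * (s + 1) := Nat.lt_succ_sqrt n
    have hu : u n = (s - 1) / 2 := rfl
    have h2 : s ≤ 2 * u n + 2 := by omega
    have h3 : 1 ≤ u n := by omega
    exact_mod_cast (by nlinarith : n ≤ 25 * u n ^ 2)
  calc (n : ℝ) ^ s * q n ^ (∑ i ∈ range s, i)
      ≤ (n : ℝ) ^ s * c ^ (s * u n) := by
        gcongr
        exact (pow_le_pow_left₀ (hq0 n) hqn _).trans (pow_le_pow_of_le_one hc0 hc1.le hsu)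
    _ = ((n : ℝ) * c ^ u n) ^ s := by rw [mul_pow, ← pow_mul, mul_comm (u n)]
    _ ≤ (25 * ((u n : ℝ) ^ 2 * c ^ u n)) ^ s := by
        gcongr ?_ ^ s
        linarith [mul_le_mul_of_nonneg_right hn25 (pow_nonneg hc0 (u n))]

theorem one_law_for_triangles_subcritical_q_general (K P : ℕ → ℕ)
    (hKP : ∀ n, K n ≤ P n)
    (qstar : ℝ) (hq1 : qstar < 1)
    (hq : Tendsto (fun n => qKP (K n) (P n)) atTop (nhds qstar)) :
    Tendsto (fun n : ℕ =>
        (((keySpace n (K n) (P n)).filter (fun f => hasTriangle n (P n) f)).card : ℝ) /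
          ((keySpace n (K n) (P n)).card : ℝ))
      atTop (nhds 1) := by
  obtain ⟨c, hqc, hc1⟩ := exists_between hq1
  have hno : Tendsto (fun n : ℕ =>
      (#{f ∈ keySpace n (K n) (P n) | ¬hasTriangle n (P n) f} : ℝ) / #(keySpace n (K n) (P n)))
      atTop (nhds 0) :=
    squeeze_zero (fun n => by positivity)
      (fun n => card_filter_not_hasTriangle_div_le (hKP n) (by nlinarith [Nat.sqrt_le n]))
      (tendsto_pow_sqrt_mul_pow_sum_range (fun n => qKP_nonneg_s12 _ _) hc1
        (hq.eventually_le_const hqc))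
  have hne : ∀ n, (keySpace n (K n) (P n)).Nonempty := fun n =>
    card_pos.1 (by rw [card_keySpace]; exact pow_pos (Nat.choose_pos (hKP n)) n)
  refine (sub_zero (1 : ℝ) ▸ hno.const_sub 1).congr fun n => ?_
  exact (card_filter_div_card_eq_one_sub (hne n) _).symm

theorem one_law_for_triangles_subcritical_q (K P : ℕ → ℕ)
    (hK : ∀ n, 0 < K n) (hKP : ∀ n, K n ≤ P n)
    (qstar : ℝ) (hq0 : 0 ≤ qstar) (hq1 : qstar < 1)
    (hq : Tendsto (fun n => qKP (K n) (P n)) atTop (nhds qstar)) :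
    Tendsto (fun n : ℕ =>
        (((keySpace n (K n) (P n)).filter (fun f => hasTriangle n (P n) f)).card : ℝ) /
          ((keySpace n (K n) (P n)).card : ℝ))
      atTop (nhds 1) :=
  one_law_for_triangles_subcritical_q_general K P hKP qstar hq1 hq
end

section
/- Fix positive integers K and P with 3K ≤ P. For c_k(K,P) = [C(K,k)C(P−K,K−k)/C(P,K)]·[C(P−2K+k,K)/C(P,K)]², the ratio c_{k+1}/c_k equals (1/(k+1))·((K−k)²/(P−3K+k+1))·((P−2K+k+1)/(P−3K+k+1)) and is monotonically nonincreasing in k for 0 ≤ k ≤ K−1. -/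
/-!
Each factor of `c_k` changes by a single rational factor when `k` increases by one
(`C(n, j+1) = C(n, j) (n - j)/(j + 1)` and `C(n, K) = C(n+1, K) (n + 1 - K)/(n + 1)`), and their
product is the stated ratio. As a function of a real variable `x ∈ [0, K]` the ratio is a product
of the nonnegative nonincreasing factors `1/(x+1)`, `(K-x)²/u`, `1 + K/u` with
`u = P - 3K + x + 1 ≥ 1`, hence nonincreasing.
-/

/-- `c_k(K,P) = [C(K,k)·C(P-K,K-k)/C(P,K)]·[C(P-2K+k,K)/C(P,K)]²`. -/
noncomputable def cKP (k K P : ℕ) : ℝ :=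
  ((K.choose k * (P - K).choose (K - k) : ℕ) : ℝ) / (P.choose K) *
    (((P - 2 * K + k).choose K : ℝ) / (P.choose K)) ^ 2

namespace Nat

variable {F : Type*} [Field F] [CharZero F]

theorem cast_choose_succ_right (n k : ℕ) :
    (n.choose (k + 1) : F) = n.choose k * ((n - k) / (k + 1)) := by
  rw [mul_div_assoc', eq_div_iff k.cast_add_one_ne_zero]
  rcases le_or_gt k n with hkn | hnk
  · have := congrArg (Nat.cast (R := F)) (choose_succ_right_eq n k)
    push_cast [hkn] at this
    exact this
  · simp [choose_eq_zero_of_lt hnk, choose_eq_zero_of_lt (hnk.trans (lt_succ_self k))]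

theorem cast_choose_of_succ (n k : ℕ) :
    (n.choose k : F) = (n + 1).choose k * ((n + 1 - k) / (n + 1)) := by
  rw [mul_div_assoc', eq_div_iff n.cast_add_one_ne_zero]
  rcases le_or_gt k (n + 1) with hkn | hnk
  · have := congrArg (Nat.cast (R := F)) (choose_mul_succ_eq n k)
    push_cast [hkn] at this
    exact this
  · simp [choose_eq_zero_of_lt hnk, choose_eq_zero_of_lt ((lt_succ_self n).trans hnk)]

end Nat

noncomputable def cKPRatio (K P x : ℝ) : ℝ :=
  1 / (x + 1) * ((K - x) ^ 2 / (P - 3 * K + x + 1)) * ((P - 2 * K + x + 1) / (P - 3 * K + x + 1))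

theorem cKP_succ_eq {k K P : ℕ} (hk : k < K) (h3K : 3 * K ≤ P) :
    cKP (k + 1) K P = cKP k K P * cKPRatio K P k := by
  have hKk : K - k = K - (k + 1) + 1 := by omega
  have hidx : P - 2 * K + (k + 1) = P - 2 * K + k + 1 := by omega
  have h3K' : (3 * K : ℝ) ≤ P := by exact_mod_cast h3K
  have hu : (P : ℝ) - 3 * K + k + 1 ≠ 0 := by linarith
  have hv : (P : ℝ) - 2 * K + k + 1 ≠ 0 := by linarith
  have ha : (K : ℝ) - k ≠ 0 := sub_ne_zero.2 (by exact_mod_cast hk.ne')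
  unfold cKP cKPRatio
  rw [hKk, hidx]
  push_cast
  rw [Nat.cast_choose_succ_right K k, Nat.cast_choose_succ_right (P - K) (K - (k + 1)),
    Nat.cast_choose_of_succ (P - 2 * K + k) K]
  push_cast [Nat.cast_sub (by omega : K ≤ P), Nat.cast_sub (by omega : k + 1 ≤ K),
    Nat.cast_sub (by omega : 2 * K ≤ P)]
  rw [show (P : ℝ) - K - (K - (k + 1)) = P - 2 * K + k + 1 by ring,
    show (K : ℝ) - (k + 1) + 1 = K - k by ring,
    show (P : ℝ) - 2 * K + k + 1 - K = P - 3 * K + k + 1 by ring]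
  field_simp
  grind

theorem cKP_pos {k K P : ℕ} (hk : k ≤ K) (h3K : 3 * K ≤ P) : 0 < cKP k K P := by
  unfold cKP
  have := Nat.choose_pos hk
  have := Nat.choose_pos (by omega : K - k ≤ P - K)
  have := Nat.choose_pos (by omega : K ≤ P - 2 * K + k)
  have := Nat.choose_pos (by omega : K ≤ P)
  positivity

theorem cKP_succ_div {k K P : ℕ} (hk : k < K) (h3K : 3 * K ≤ P) :
    cKP (k + 1) K P / cKP k K P = cKPRatio K P k := by
  rw [cKP_succ_eq hk h3K, mul_div_cancel_left₀ _ (cKP_pos hk.le h3K).ne']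

theorem cKPRatio_antitoneOn {K P : ℝ} (h3K : 3 * K ≤ P) :
    AntitoneOn (cKPRatio K P) (Set.Icc 0 K) := by
  rintro x ⟨hx0, hxK⟩ y ⟨-, hyK⟩ hxy
  have hux : 0 < P - 3 * K + x + 1 := by linarith
  have huy : 0 < P - 3 * K + y + 1 := by linarith
  have hlast :
      (P - 2 * K + y + 1) / (P - 3 * K + y + 1) ≤ (P - 2 * K + x + 1) / (P - 3 * K + x + 1) := by
    rw [div_le_div_iff₀ huy hux]
    nlinarith
  unfold cKPRatio
  gcongr ?_ * ?_ * ?_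
  · exact div_nonneg (by linarith) huy.le
  · gcongr
  · gcongr

theorem cKP_ratio_formula_and_monotone_general (K P : ℕ) (h3K : 3 * K ≤ P) :
    (∀ k : ℕ, k < K →
      cKP (k + 1) K P / cKP k K P
        = (1 / ((k : ℝ) + 1)) * (((K : ℝ) - k) ^ 2 / ((P : ℝ) - 3 * K + k + 1)) *
            (((P : ℝ) - 2 * K + k + 1) / ((P : ℝ) - 3 * K + k + 1)))
    ∧
    (∀ k : ℕ, k + 2 ≤ K →
      cKP (k + 2) K P / cKP (k + 1) K P ≤ cKP (k + 1) K P / cKP k K P) := by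
  refine ⟨fun k hk => cKP_succ_div hk h3K, fun k hk => ?_⟩
  rw [cKP_succ_div (k := k + 1) (by omega) h3K, cKP_succ_div (by omega) h3K]
  have hmem : ∀ j : ℕ, j ≤ K → (j : ℝ) ∈ Set.Icc 0 (K : ℝ) := fun j hj =>
    ⟨j.cast_nonneg, by exact_mod_cast hj⟩
  exact cKPRatio_antitoneOn (by exact_mod_cast h3K) (hmem k (by omega)) (hmem (k + 1) (by omega))
    (by simp)

theorem cKP_ratio_formula_and_monotone (K P : ℕ) (hK : 0 < K) (h3K : 3 * K ≤ P) :
    (∀ k : ℕ, k < K →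
      cKP (k + 1) K P / cKP k K P
        = (1 / ((k : ℝ) + 1)) * (((K : ℝ) - k) ^ 2 / ((P : ℝ) - 3 * K + k + 1)) *
            (((P : ℝ) - 2 * K + k + 1) / ((P : ℝ) - 3 * K + k + 1)))
    ∧
    (∀ k : ℕ, k + 2 ≤ K →
      cKP (k + 2) K P / cKP (k + 1) K P ≤ cKP (k + 1) K P / cKP k K P) :=
  cKP_ratio_formula_and_monotone_general K P h3K
end

section
/- For positive integers K ≤ P with 2K ≤ P, c₁(K,P) ≤ 1 − q(K,P), where c₁(K,P) = [C(K,1)C(P−K,K−1)/C(P,K)]·[C(P−2K+1,K)/C(P,K)]² and q(K,P) = C(P−K,K)/C(P,K). -/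
/-! Since the squared factor of `c₁` is at most one, `c₁ ≤ P(|K₁ ∩ K₂| = 1)`, while
`q = P(K₁ ∩ K₂ = ∅)`; the two events are disjoint. In counting terms they are the terms
`(1, K - 1)` and `(0, K)` of Vandermonde's identity for `C(K + (P - K), K)`. -/

theorem Nat.mul_choose_pred_add_choose_le (n m k : ℕ) (hk : 0 < k) :
    n * m.choose (k - 1) + m.choose k ≤ (n + m).choose k := by
  rw [Nat.add_choose_eq]
  have h := Finset.add_le_sum (f := fun ij : ℕ × ℕ ↦ n.choose ij.1 * m.choose ij.2)
    (s := Finset.HasAntidiagonal.antidiagonal k) (i := (1, k - 1)) (j := (0, k))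
    (fun _ _ ↦ Nat.zero_le _) (by simpa using Nat.add_sub_cancel' hk) (by simp) (by simp)
  simpa using h

theorem c_one_le_one_sub_q (K P : ℕ) (hK : 0 < K) (hKP : K ≤ P) (h2K : 2 * K ≤ P) :
    cKP 1 K P ≤ 1 - qKP K P := by
  have hC : (0 : ℝ) < P.choose K := by exact_mod_cast Nat.choose_pos hKP
  have hsq : (((P - 2 * K + 1).choose K : ℝ) / P.choose K) ^ 2 ≤ 1 :=
    pow_le_one₀ (by positivity) <| div_le_one_of_le₀
      (by exact_mod_cast Nat.choose_le_choose K (by omega)) (by positivity)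
  have hvand := Nat.mul_choose_pred_add_choose_le K (P - K) K hK
  rw [Nat.add_sub_cancel' hKP] at hvand
  rw [qKP, if_pos h2K, cKP, Nat.choose_one_right, le_sub_iff_add_le]
  calc _ ≤ ((K * (P - K).choose (K - 1) : ℕ) : ℝ) / P.choose K
          + ((P - K).choose K : ℝ) / P.choose K := by
        gcongr
        exact mul_le_of_le_one_right (by positivity) hsq
    _ ≤ 1 := by
        rw [← add_div, div_le_one hC]
        exact_mod_cast hvand
end
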